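/- arXiv:2205.13498 — 2 statements merged into one kernel-verified Lean document; each statement's English description precedes it below -/
import Mathlib

section
/- Planarisations are epimorphisms in the category of linear spaces with embeddings: if f: A → A' is a planarisation and g_1, g_2: A' → C are embeddings with g_1 ∘ f = g_2 ∘ f, then g_1 = g_2. -/
open Set Function

universe u v w

/-- A linear space: a set of points with a family of lines, each line having at
least 2 points, such that any two distinct points lie on a common line and any
two distinct lines meet in at most one point. -/
structure LinSpace (X : Type u) where
  lines : Set (Set X)
  two_le : ∀ L ∈ lines, 2 ≤ L.encard
  exists_line : ∀ x y : X, x ≠ y → ∃ L ∈ lines, x ∈ L ∧ y ∈ L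
  inter_subsingleton : ∀ L₁ ∈ lines, ∀ L₂ ∈ lines, L₁ ≠ L₂ → (L₁ ∩ L₂).Subsingleton

/-- Collinearity of three points. -/
def Collin {X : Type u} (A : LinSpace X) (x y z : X) : Prop :=
  ∃ L ∈ A.lines, x ∈ L ∧ y ∈ L ∧ z ∈ L

/-- An embedding of linear spaces: an injection preserving and reflecting collinearity. -/
def IsEmbedding {X : Type u} {Y : Type v} (A : LinSpace X) (B : LinSpace Y) (f : X → Y) : Prop :=
  Function.Injective f ∧ ∀ x y z : X, Collin A x y z ↔ Collin B (f x) (f y) (f z)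

/-- The linear space has degree at most `n`: every line has at most `n` points
and every point lies on at most `n` lines. -/
def DegLE {X : Type u} (A : LinSpace X) (n : ℕ) : Prop :=
  (∀ L ∈ A.lines, L.encard ≤ (n : ℕ∞)) ∧
  ∀ p : X, {L | L ∈ A.lines ∧ p ∈ L}.encard ≤ (n : ℕ∞)

/-- There exist four points, no three of which are collinear. -/
def FourIndep {X : Type u} (A : LinSpace X) : Prop :=
  ∃ a b c d : X, a ≠ b ∧ a ≠ c ∧ a ≠ d ∧ b ≠ c ∧ b ≠ d ∧ c ≠ d ∧
    ∀ p q r : X, p ∈ ({a, b, c, d} : Set X) → q ∈ ({a, b, c, d} : Set X) →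
      r ∈ ({a, b, c, d} : Set X) → p ≠ q → p ≠ r → q ≠ r → ¬ Collin A p q r

/-- A projective plane: every two lines intersect, and there are four points no
three of which are collinear. -/
def IsProjPlane {X : Type u} (A : LinSpace X) : Prop :=
  (∀ L₁ ∈ A.lines, ∀ L₂ ∈ A.lines, (L₁ ∩ L₂).Nonempty) ∧ FourIndep A

/-- An automorphism of a linear space. -/
def IsAuto {X : Type u} (A : LinSpace X) (g : X → X) : Prop :=
  Function.Bijective g ∧ ∀ x y z : X, Collin A x y z ↔ Collin A (g x) (g y) (g z)

/-- A homogeneous linear space: every isomorphism between finite subspaces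
extends to an automorphism. -/
def Homogeneous {X : Type u} (A : LinSpace X) : Prop :=
  ∀ S : Set X, S.Finite → ∀ f : X → X, Set.InjOn f S →
    (∀ x ∈ S, ∀ y ∈ S, ∀ z ∈ S, (Collin A x y z ↔ Collin A (f x) (f y) (f z))) →
    ∃ g : X → X, IsAuto A g ∧ ∀ x ∈ S, g x = f x

/-- The Fano plane: the unique projective plane of order 2 (7 points, every line
has exactly 3 points). -/
def IsFano {X : Type u} (A : LinSpace X) : Prop :=
  IsProjPlane A ∧ (∀ L ∈ A.lines, L.encard = 3) ∧ (Set.univ : Set X).encard = 7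

/-- The projective plane over F₃: the unique projective plane of order 3
(13 points, every line has exactly 4 points). -/
def IsPG2_3 {X : Type u} (A : LinSpace X) : Prop :=
  IsProjPlane A ∧ (∀ L ∈ A.lines, L.encard = 4) ∧ (Set.univ : Set X).encard = 13

/-- The planar closure of a set `S` in a linear space `B`: the closure of `S`
under adding intersection points of pairs of lines spanned by the closure. -/
inductive PlanarCl {Y : Type v} (B : LinSpace Y) (S : Set Y) : Y → Prop
  | base {p : Y} (hp : p ∈ S) : PlanarCl B S p
  | inter {p : Y} (L₁ L₂ : Set Y) (p₁ q₁ p₂ q₂ : Y)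
      (hL₁ : L₁ ∈ B.lines) (hL₂ : L₂ ∈ B.lines) (hne : L₁ ≠ L₂)
      (hpq₁ : p₁ ≠ q₁) (hp₁ : p₁ ∈ L₁) (hq₁ : q₁ ∈ L₁)
      (hpq₂ : p₂ ≠ q₂) (hp₂ : p₂ ∈ L₂) (hq₂ : q₂ ∈ L₂)
      (cp₁ : PlanarCl B S p₁) (cq₁ : PlanarCl B S q₁)
      (cp₂ : PlanarCl B S p₂) (cq₂ : PlanarCl B S q₂)
      (hpL₁ : p ∈ L₁) (hpL₂ : p ∈ L₂) : PlanarCl B S p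

/-- A planarisation: an embedding such that every point of the target lies in
the planar closure of the image (i.e. the target is obtained by successively
adding intersection points of pairs of lines). -/
def IsPlanarisation {X : Type u} {Y : Type v} (A : LinSpace X) (B : LinSpace Y) (f : X → Y) : Prop :=
  IsEmbedding A B f ∧ ∀ y : Y, PlanarCl B (Set.range f) y

/-- An aplanar embedding: any two lines of `A` whose images intersect in `B`
already intersect in `A`. -/
def IsAplanar {X : Type u} {Y : Type v} (A : LinSpace X) (B : LinSpace Y) (f : X → Y) : Prop :=
  IsEmbedding A B f ∧
  ∀ L₁ ∈ A.lines, ∀ L₂ ∈ A.lines, ∀ M₁ ∈ B.lines, ∀ M₂ ∈ B.lines,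
    f '' L₁ ⊆ M₁ → f '' L₂ ⊆ M₂ → (M₁ ∩ M₂).Nonempty → (L₁ ∩ L₂).Nonempty

/-- The induced subspace on the set `S` of points of `B` is a projective plane:
any two induced lines (lines of `B` meeting `S` in at least two points) meet
inside `S`, and `S` contains four points no three collinear. -/
def IsProjPlaneOn {Y : Type v} (B : LinSpace Y) (S : Set Y) : Prop :=
  (∀ L₁ ∈ B.lines, ∀ L₂ ∈ B.lines,
      2 ≤ (L₁ ∩ S).encard → 2 ≤ (L₂ ∩ S).encard → (L₁ ∩ L₂ ∩ S).Nonempty) ∧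
  ∃ a b c d : Y, a ∈ S ∧ b ∈ S ∧ c ∈ S ∧ d ∈ S ∧
    a ≠ b ∧ a ≠ c ∧ a ≠ d ∧ b ≠ c ∧ b ≠ d ∧ c ≠ d ∧
    ∀ p q r : Y, p ∈ ({a, b, c, d} : Set Y) → q ∈ ({a, b, c, d} : Set Y) →
      r ∈ ({a, b, c, d} : Set Y) → p ≠ q → p ≠ r → q ≠ r → ¬ Collin B p q r

/-- Two distinct points lie on a unique line. -/
lemma line_unique {X : Type u} (A : LinSpace X) {L L' : Set X} (hL : L ∈ A.lines)
    (hL' : L' ∈ A.lines) {x y : X} (hxy : x ≠ y) (hx : x ∈ L) (hy : y ∈ L)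
    (hx' : x ∈ L') (hy' : y ∈ L') : L = L' := by
  by_contra hne
  exact hxy (A.inter_subsingleton L hL L' hL' hne ⟨hx, hx'⟩ ⟨hy, hy'⟩)

/-- Planarisations are epimorphisms in the category of linear spaces with
embeddings. -/
theorem stmt12 {X : Type u} {Y : Type v} {Z : Type w}
    (A : LinSpace X) (B : LinSpace Y) (C : LinSpace Z)
    (f : X → Y) (hf : IsPlanarisation A B f)
    (g₁ g₂ : Y → Z) (hg₁ : IsEmbedding B C g₁) (hg₂ : IsEmbedding B C g₂)
    (h : g₁ ∘ f = g₂ ∘ f) :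
    g₁ = g₂ := by
  have key : ∀ y : Y, PlanarCl B (Set.range f) y → g₁ y = g₂ y := by
    intro y hy
    induction hy with
    | @base p hp =>
      obtain ⟨x, rfl⟩ := hp
      exact congrFun h x
    | @inter p L₁ L₂ p₁ q₁ p₂ q₂ hL₁ hL₂ hne hpq₁ hp₁ hq₁ hpq₂ hp₂ hq₂ cp₁ cq₁ cp₂ cq₂
        hpL₁ hpL₂ ih₁ ih₂ ih₃ ih₄ =>
      -- collinearity facts
      have col1 : Collin C (g₁ p₁) (g₁ q₁) (g₁ p) :=
        (hg₁.2 p₁ q₁ p).mp ⟨L₁, hL₁, hp₁, hq₁, hpL₁⟩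
      have col1' : Collin C (g₁ p₁) (g₁ q₁) (g₂ p) := by
        rw [ih₁, ih₂]
        exact (hg₂.2 p₁ q₁ p).mp ⟨L₁, hL₁, hp₁, hq₁, hpL₁⟩
      have col2 : Collin C (g₁ p₂) (g₁ q₂) (g₁ p) :=
        (hg₁.2 p₂ q₂ p).mp ⟨L₂, hL₂, hp₂, hq₂, hpL₂⟩
      have col2' : Collin C (g₁ p₂) (g₁ q₂) (g₂ p) := by
        rw [ih₃, ih₄]
        exact (hg₂.2 p₂ q₂ p).mp ⟨L₂, hL₂, hp₂, hq₂, hpL₂⟩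
      obtain ⟨M₁, hM₁, hm1, hm2, hm3⟩ := col1
      obtain ⟨M₁', hM₁', hm1', hm2', hm3'⟩ := col1'
      obtain ⟨M₂, hM₂, hn1, hn2, hn3⟩ := col2
      obtain ⟨M₂', hM₂', hn1', hn2', hn3'⟩ := col2'
      have hgpq₁ : g₁ p₁ ≠ g₁ q₁ := fun e => hpq₁ (hg₁.1 e)
      have hgpq₂ : g₁ p₂ ≠ g₁ q₂ := fun e => hpq₂ (hg₁.1 e)
      have e₁ : M₁ = M₁' := line_unique C hM₁ hM₁' hgpq₁ hm1 hm2 hm1' hm2'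
      have e₂ : M₂ = M₂' := line_unique C hM₂ hM₂' hgpq₂ hn1 hn2 hn1' hn2'
      subst e₁; subst e₂
      -- M₁ ≠ M₂
      have hMne : M₁ ≠ M₂ := by
        intro e
        subst e
        have c3 : Collin B p₁ q₁ p₂ := (hg₁.2 p₁ q₁ p₂).mpr ⟨M₁, hM₁, hm1, hm2, hn1⟩
        have c4 : Collin B p₁ q₁ q₂ := (hg₁.2 p₁ q₁ q₂).mpr ⟨M₁, hM₁, hm1, hm2, hn2⟩
        obtain ⟨N, hN, ha1, ha2, ha3⟩ := c3
        obtain ⟨N', hN', hb1, hb2, hb3⟩ := c4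
        have eN : N = L₁ := line_unique B hN hL₁ hpq₁ ha1 ha2 hp₁ hq₁
        have eN' : N' = L₁ := line_unique B hN' hL₁ hpq₁ hb1 hb2 hp₁ hq₁
        subst eN; subst eN'
        exact hne (line_unique B hL₁ hL₂ hpq₂ ha3 hb3 hp₂ hq₂)
      exact C.inter_subsingleton M₁ hM₁ M₂ hM₂ hMne ⟨hm3, hn3⟩ ⟨hm3', hn3'⟩
  funext y
  exact key y (hf.2 y)
end

section
/- If X is an uncountable projective plane and Y ⊆ X is a countable set of points, then there exists a countable projective subplane of X containing Y. -/
open Set Function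

universe u v w

/-- If `X` is an uncountable projective plane and `Y ⊆ X` is countable, there is
a countable projective subplane of `X` containing `Y`. -/
theorem stmt19 {X : Type u} (A : LinSpace X) (hA : IsProjPlane A)
    (hunc : ¬ Countable X) (Y : Set X) (hY : Y.Countable) :
    ∃ S : Set X, Y ⊆ S ∧ S.Countable ∧ IsProjPlaneOn A S := by

  obtain ⟨hmeet, a, b, c, d, hab, hac, had, hbc, hbd, hcd, hindep⟩ := hA
  have huniq : ∀ L₁ ∈ A.lines, ∀ L₂ ∈ A.lines, ∀ p q : X, p ≠ q →
      p ∈ L₁ → q ∈ L₁ → p ∈ L₂ → q ∈ L₂ → L₁ = L₂ := by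
    intro L₁ h₁ L₂ h₂ p q hpq hp1 hq1 hp2 hq2
    by_contra hne
    exact hpq (A.inter_subsingleton L₁ h₁ L₂ h₂ hne ⟨hp1, hp2⟩ ⟨hq1, hq2⟩)
  set step : Set X → Set X := fun T => T ∪
    ⋃ p₁ ∈ T, ⋃ q₁ ∈ T, ⋃ p₂ ∈ T, ⋃ q₂ ∈ T,
      {p | ∃ L₁ ∈ A.lines, ∃ L₂ ∈ A.lines, L₁ ≠ L₂ ∧ p₁ ≠ q₁ ∧ p₂ ≠ q₂ ∧
        p₁ ∈ L₁ ∧ q₁ ∈ L₁ ∧ p₂ ∈ L₂ ∧ q₂ ∈ L₂ ∧ p ∈ L₁ ∧ p ∈ L₂} with hstepdef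
  have hstep_sub : ∀ T : Set X, T ⊆ step T := fun T => Set.subset_union_left
  have hstep_count : ∀ T : Set X, T.Countable → (step T).Countable := by
    intro T hT
    refine hT.union ?_
    refine hT.biUnion fun p₁ _ => hT.biUnion fun q₁ _ => hT.biUnion fun p₂ _ =>
      hT.biUnion fun q₂ _ => Set.Subsingleton.countable ?_
    rintro p ⟨L₁, hL₁, L₂, hL₂, hLne, hpq₁, hpq₂, h1, h2, h3, h4, hp1, hp2⟩
      p' ⟨L₁', hL₁', L₂', hL₂', hLne', _, _, h1', h2', h3', h4', hp1', hp2'⟩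
    have e1 : L₁ = L₁' := huniq _ hL₁ _ hL₁' _ _ hpq₁ h1 h2 h1' h2'
    have e2 : L₂ = L₂' := huniq _ hL₂ _ hL₂' _ _ hpq₂ h3 h4 h3' h4'
    subst e1; subst e2
    exact A.inter_subsingleton L₁ hL₁ L₂ hL₂ hLne ⟨hp1, hp2⟩ ⟨hp1', hp2'⟩
  set T₀ : Set X := Y ∪ {a, b, c, d} with hT₀
  have hT₀c : T₀.Countable := hY.union (Set.Finite.countable (Set.toFinite _))
  set S : Set X := ⋃ n, step^[n] T₀ with hSdef
  have hmono : Monotone (fun n => step^[n] T₀) :=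
    monotone_nat_of_le_succ fun n => by
      rw [Function.iterate_succ_apply']; exact hstep_sub _
  have hScount : S.Countable := by
    refine Set.countable_iUnion fun n => ?_
    induction n with
    | zero => simpa using hT₀c
    | succ n ih =>
      rw [Function.iterate_succ_apply']
      exact hstep_count _ ih
  have hYS : T₀ ⊆ S := Set.subset_iUnion (fun n => step^[n] T₀) 0
  -- key closure property
  have hclosed : ∀ L₁ ∈ A.lines, ∀ L₂ ∈ A.lines, L₁ ≠ L₂ →
      ∀ p₁ ∈ S, ∀ q₁ ∈ S, ∀ p₂ ∈ S, ∀ q₂ ∈ S, p₁ ≠ q₁ → p₂ ≠ q₂ →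
      p₁ ∈ L₁ → q₁ ∈ L₁ → p₂ ∈ L₂ → q₂ ∈ L₂ →
      ∀ p, p ∈ L₁ → p ∈ L₂ → p ∈ S := by
    intro L₁ hL₁ L₂ hL₂ hne p₁ hp₁ q₁ hq₁ p₂ hp₂ q₂ hq₂ hpq₁ hpq₂ h1 h2 h3 h4 p hpL₁ hpL₂
    obtain ⟨n₁, hn₁⟩ := Set.mem_iUnion.1 hp₁
    obtain ⟨n₂, hn₂⟩ := Set.mem_iUnion.1 hq₁
    obtain ⟨n₃, hn₃⟩ := Set.mem_iUnion.1 hp₂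
    obtain ⟨n₄, hn₄⟩ := Set.mem_iUnion.1 hq₂
    set N := max (max n₁ n₂) (max n₃ n₄) with hN
    have m1 : p₁ ∈ step^[N] T₀ := hmono (le_trans (le_max_left _ _) (le_max_left _ _)) hn₁
    have m2 : q₁ ∈ step^[N] T₀ := hmono (le_trans (le_max_right _ _) (le_max_left _ _)) hn₂
    have m3 : p₂ ∈ step^[N] T₀ := hmono (le_trans (le_max_left _ _) (le_max_right _ _)) hn₃
    have m4 : q₂ ∈ step^[N] T₀ := hmono (le_trans (le_max_right _ _) (le_max_right _ _)) hn₄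
    have : p ∈ step (step^[N] T₀) := by
      refine Set.mem_union_right _ ?_
      simp only [Set.mem_iUnion]
      exact ⟨p₁, m1, q₁, m2, p₂, m3, q₂, m4,
        ⟨L₁, hL₁, L₂, hL₂, hne, hpq₁, hpq₂, h1, h2, h3, h4, hpL₁, hpL₂⟩⟩
    have : p ∈ step^[N+1] T₀ := by rwa [Function.iterate_succ_apply']
    exact Set.mem_iUnion.2 ⟨N + 1, this⟩
  refine ⟨S, fun y hy => hYS (Set.mem_union_left _ hy), hScount, ?_, a, b, c, d,
    hYS (Set.mem_union_right _ (by simp)), hYS (Set.mem_union_right _ (by simp)),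
    hYS (Set.mem_union_right _ (by simp)), hYS (Set.mem_union_right _ (by simp)),
    hab, hac, had, hbc, hbd, hcd, hindep⟩
  intro L₁ hL₁ L₂ hL₂ hc₁ hc₂
  obtain ⟨p₁, q₁, hp₁, hq₁, hpq₁⟩ :=
    Set.one_lt_encard_iff.1 (lt_of_lt_of_le (by norm_num) hc₁)
  obtain ⟨p₂, q₂, hp₂, hq₂, hpq₂⟩ :=
    Set.one_lt_encard_iff.1 (lt_of_lt_of_le (by norm_num) hc₂)
  rcases eq_or_ne L₁ L₂ with rfl | hne
  · exact ⟨p₁, ⟨hp₁.1, hp₁.1⟩, hp₁.2⟩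
  · obtain ⟨p, hpL₁, hpL₂⟩ := hmeet L₁ hL₁ L₂ hL₂
    exact ⟨p, ⟨hpL₁, hpL₂⟩, hclosed L₁ hL₁ L₂ hL₂ hne p₁ hp₁.2 q₁ hq₁.2 p₂ hp₂.2 q₂ hq₂.2
      hpq₁ hpq₂ hp₁.1 hq₁.1 hp₂.1 hq₂.1 p hpL₁ hpL₂⟩
end
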